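/- arXiv:2507.20581 — 3 statements merged into one kernel-verified Lean document; each statement's English description precedes it below -/
import Mathlib

section
/- Let n ≥ 2, s ∈ (0,1), c_s > 0. Let K : ℝⁿ \ {0} → [0,∞) be symmetric, homogeneous of degree −n−2s and bounded on the sphere, and define θ_K := 2 c_s ∫_{ℝ^{n−1}} (h',1) K((h',1)) dh' ∈ ℝⁿ. Let ϑ = (ϑ', ϑ_n), θ = (θ', θ_n) ∈ ℝⁿ with ϑ_n, θ_n ≠ 0, and define the sheared kernel K̃(h) := (θ_n/ϑ_n) K( h' − (ϑ'/ϑ_n − θ'/θ_n) h_n , h_n ). Then θ_{K̃} = (θ_n/ϑ_n) · ( (θ_K)' + (ϑ'/ϑ_n − θ'/θ_n)(θ_K)_n , (θ_K)_n ). In particular, if ϑ_n = (θ_K)_n and θ := ( ((θ_K)' + ϑ')/(2(θ_K)_n) , 1 ), then θ_{K̃} = θ. -/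
open MeasureTheory

/-- The Euclidean norm on the product `ℝ^{n-1} × ℝ`. -/
noncomputable def nrm2 {E : Type*} [NormedAddCommGroup E] (p : E × ℝ) : ℝ :=
  Real.sqrt (‖p.1‖ ^ 2 + p.2 ^ 2)


lemma aux_shift (m : ℕ) (K : EuclideanSpace ℝ (Fin m) × ℝ → ℝ) (hKmeas : Measurable K)
    (v : EuclideanSpace ℝ (Fin m)) :
    (∫ h' : EuclideanSpace ℝ (Fin m), K (h' - v, 1) • ((h', 1) : _ × ℝ)) =
      ((∫ h' : EuclideanSpace ℝ (Fin m), K (h', 1) • ((h', 1) : _ × ℝ)).1 +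
        (∫ h' : EuclideanSpace ℝ (Fin m), K (h', 1) • ((h', 1) : _ × ℝ)).2 • v,
       (∫ h' : EuclideanSpace ℝ (Fin m), K (h', 1) • ((h', 1) : _ × ℝ)).2) := by
  set g : EuclideanSpace ℝ (Fin m) → EuclideanSpace ℝ (Fin m) × ℝ :=
    fun h' => K (h', 1) • ((h', 1) : EuclideanSpace ℝ (Fin m) × ℝ) with hg
  by_cases hint : Integrable g
  · have hfm : Measurable fun h' : EuclideanSpace ℝ (Fin m) => K (h', 1) := by fun_prop
    have hf : Integrable fun h' : EuclideanSpace ℝ (Fin m) => K (h', 1) := by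
      refine hint.mono hfm.aestronglyMeasurable ?_
      filter_upwards with h'
      rw [hg]
      simp only [norm_smul, Real.norm_eq_abs]
      refine le_mul_of_one_le_right (abs_nonneg _) ?_
      simpa using norm_snd_le ((h', 1) : EuclideanSpace ℝ (Fin m) × ℝ)
    have tr := integral_sub_right_eq_self (μ := (volume : Measure (EuclideanSpace ℝ (Fin m))))
      (fun t => K (t, 1) • ((t + v, 1) : EuclideanSpace ℝ (Fin m) × ℝ)) v
    simp only [sub_add_cancel] at tr
    have key : (∫ h' : EuclideanSpace ℝ (Fin m), K (h' - v, 1) • ((h', 1) : _ × ℝ)) =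
        (∫ h', g h') + (∫ h' : EuclideanSpace ℝ (Fin m), K (h', 1)) •
          ((v, 0) : EuclideanSpace ℝ (Fin m) × ℝ) := by
      rw [tr, ← integral_smul_const, ← integral_add hint (hf.smul_const _)]
      congr 1; funext h'
      rw [hg, ← smul_add]
      congr 1
      simp [Prod.mk_add_mk]
    have hsnd : (∫ h', g h').2 = ∫ h' : EuclideanSpace ℝ (Fin m), K (h', 1) := by
      have h7 := (ContinuousLinearMap.snd ℝ (EuclideanSpace ℝ (Fin m)) ℝ).integral_comp_comm hint
      simp only [ContinuousLinearMap.coe_snd'] at h7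
      rw [← h7]
      congr 1; funext h'
      rw [hg]; simp
    rw [key]
    ext <;> simp [hsnd]
  · have hg2 : ¬ Integrable (fun h' : EuclideanSpace ℝ (Fin m) =>
        K (h' - v, 1) • ((h', 1) : _ × ℝ)) := by
      intro h
      have hf2m : Measurable fun h' : EuclideanSpace ℝ (Fin m) => K (h' - v, 1) := by fun_prop
      have hf2 : Integrable fun h' : EuclideanSpace ℝ (Fin m) => K (h' - v, 1) := by
        refine h.mono hf2m.aestronglyMeasurable ?_
        filter_upwards with h'
        simp only [norm_smul, Real.norm_eq_abs]
        refine le_mul_of_one_le_right (abs_nonneg _) ?_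
        simpa using norm_snd_le ((h', 1) : EuclideanSpace ℝ (Fin m) × ℝ)
      have h3 : Integrable (fun h' : EuclideanSpace ℝ (Fin m) =>
          K (h' - v, 1) • ((h' - v, 1) : _ × ℝ)) := by
        have h4 := h.sub (hf2.smul_const ((v, 0) : EuclideanSpace ℝ (Fin m) × ℝ))
        refine h4.congr ?_
        filter_upwards with h'
        simp only [Pi.sub_apply]
        rw [← smul_sub]
        congr 1
        simp [Prod.mk_sub_mk]
      have h5 : Integrable g := by
        have h6 := h3.comp_add_right v
        refine h6.congr ?_
        filter_upwards with h'
        rw [hg]; simp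
      exact hint h5
    rw [integral_undef hint, integral_undef hg2]
    simp
    rfl

theorem stmt_14 (m : ℕ) (hm : 1 ≤ m) (s cs Λ : ℝ) (hs : s ∈ Set.Ioo (0 : ℝ) 1)
    (hcs : 0 < cs)
    (K : EuclideanSpace ℝ (Fin m) × ℝ → ℝ)
    (hKmeas : Measurable K) (hKnn : ∀ p, 0 ≤ K p) (hKsymm : ∀ p, K (-p) = K p)
    (hKhom : ∀ c : ℝ, 0 < c → ∀ p, K (c • p) = c ^ (-((m : ℝ) + 1) - 2 * s) * K p)
    (hKbd : ∀ p, nrm2 p = 1 → K p ≤ Λ)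
    (ϑ θ : EuclideanSpace ℝ (Fin m) × ℝ) (hϑ : ϑ.2 ≠ 0) (hθ : θ.2 ≠ 0) :
    letI θK : EuclideanSpace ℝ (Fin m) × ℝ :=
      (2 * cs) • ∫ h' : EuclideanSpace ℝ (Fin m), K (h', 1) • ((h', 1) : _ × ℝ)
    letI Ktil : EuclideanSpace ℝ (Fin m) × ℝ → ℝ :=
      fun p => (θ.2 / ϑ.2) * K (p.1 - p.2 • (ϑ.2⁻¹ • ϑ.1 - θ.2⁻¹ • θ.1), p.2)
    letI θKtil : EuclideanSpace ℝ (Fin m) × ℝ :=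
      (2 * cs) • ∫ h' : EuclideanSpace ℝ (Fin m), Ktil (h', 1) • ((h', 1) : _ × ℝ)
    θKtil = (θ.2 / ϑ.2) • ((θK.1 + θK.2 • (ϑ.2⁻¹ • ϑ.1 - θ.2⁻¹ • θ.1), θK.2) : _ × ℝ) ∧
    (ϑ.2 = θK.2 → θ = (((2 * θK.2)⁻¹ • (θK.1 + ϑ.1), 1) : _ × ℝ) → θKtil = θ) := by
  set v : EuclideanSpace ℝ (Fin m) := ϑ.2⁻¹ • ϑ.1 - θ.2⁻¹ • θ.1 with hv
  set c : ℝ := θ.2 / ϑ.2 with hc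
  set I : EuclideanSpace ℝ (Fin m) × ℝ :=
    ∫ h' : EuclideanSpace ℝ (Fin m), K (h', 1) • ((h', 1) : _ × ℝ) with hI
  have key := aux_shift m K hKmeas v
  rw [← hI] at key
  have h1 : ((2 * cs) • ∫ h' : EuclideanSpace ℝ (Fin m),
        (c * K ((h' : EuclideanSpace ℝ (Fin m)) - (1 : ℝ) • v, (1:ℝ))) • ((h', 1) : _ × ℝ)) =
      c • ((((2 * cs) • I).1 + ((2 * cs) • I).2 • v, ((2 * cs) • I).2) :
        EuclideanSpace ℝ (Fin m) × ℝ) := by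
    simp only [one_smul, mul_smul]
    rw [integral_smul, key]
    refine Prod.ext ?_ ?_ <;> simp only [Prod.smul_fst, Prod.smul_snd] <;> simp
    · clear_value v c I; module
    · clear_value v c I; ring
  refine ⟨h1, fun h2 h3 => ?_⟩
  rw [h1]
  have ha : ((2 * cs) • I).2 ≠ 0 := h2 ▸ hϑ
  have hθ2 : θ.2 = 1 := by rw [h3]
  have hθ1 : θ.1 = (2 * ((2 * cs) • I).2)⁻¹ • (((2 * cs) • I).1 + ϑ.1) := by rw [h3]
  rw [h3]
  set a : ℝ := ((2 * cs) • I).2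
  set x : EuclideanSpace ℝ (Fin m) := ((2 * cs) • I).1
  set y : EuclideanSpace ℝ (Fin m) := ϑ.1
  refine Prod.ext ?_ ?_
  · show c • (x + a • v) = (2 * a)⁻¹ • (x + y)
    rw [hc, hθ2, h2, hv, hθ2, hθ1, h2]
    show (1 / a) • (x + a • (a⁻¹ • y - (1:ℝ)⁻¹ • ((2 * a)⁻¹ • (x + y)))) = (2 * a)⁻¹ • (x + y)
    match_scalars <;> (field_simp; try ring)
  · show c • a = 1
    rw [hc, hθ2, h2]
    rw [smul_eq_mul]
    field_simp
end

section
/- Let s ∈ (0,1) and define, for admissible α, f(α) = (Γ(α+1)/Γ(α−2s+1)) · (sin(π(α−s))/sin(π(α−2s))). Then for every a ∈ (s−1, s) with a ∉ {0, 2s−1}, one has f(a) = f(2s−1−a). -/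
open Real

theorem stmt_15 (s : ℝ) (hs : s ∈ Set.Ioo (0 : ℝ) 1) (a : ℝ)
    (ha : a ∈ Set.Ioo (s - 1) s) (ha0 : a ≠ 0) (ha1 : a ≠ 2 * s - 1) :
    (Real.Gamma (a + 1) / Real.Gamma (a - 2 * s + 1)) *
        (Real.sin (π * (a - s)) / Real.sin (π * (a - 2 * s))) =
      (Real.Gamma ((2 * s - 1 - a) + 1) / Real.Gamma ((2 * s - 1 - a) - 2 * s + 1)) *
        (Real.sin (π * ((2 * s - 1 - a) - s)) / Real.sin (π * ((2 * s - 1 - a) - 2 * s))) := by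
  obtain ⟨hs0, hs1⟩ := hs
  obtain ⟨ha1', ha2'⟩ := ha
  have hpi := Real.pi_pos
  -- sin(πa) ≠ 0
  have hS3 : Real.sin (π * a) ≠ 0 := by
    rcases lt_or_gt_of_ne ha0 with h | h
    · have : Real.sin (π * (-a)) > 0 := by
        apply Real.sin_pos_of_pos_of_lt_pi
        · nlinarith
        · nlinarith
      rw [mul_neg, Real.sin_neg] at this
      linarith
    · have : Real.sin (π * a) > 0 := by
        apply Real.sin_pos_of_pos_of_lt_pi
        · nlinarith
        · nlinarith
      linarith
  -- sin(π(a-2s)) ≠ 0 : note a-2s+1 ∈ (-1,1) \ {0}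
  have hb0 : a - 2 * s + 1 ≠ 0 := by
    intro h; apply ha1; linarith
  have hS2' : Real.sin (π * (a - 2 * s + 1)) ≠ 0 := by
    rcases lt_or_gt_of_ne hb0 with h | h
    · have : Real.sin (π * (-(a - 2 * s + 1))) > 0 := by
        apply Real.sin_pos_of_pos_of_lt_pi
        · nlinarith
        · nlinarith
      rw [mul_neg, Real.sin_neg] at this
      linarith
    · have : Real.sin (π * (a - 2 * s + 1)) > 0 := by
        apply Real.sin_pos_of_pos_of_lt_pi
        · nlinarith
        · nlinarith
      linarith
  have hS2 : Real.sin (π * (a - 2 * s)) ≠ 0 := by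
    have : π * (a - 2 * s + 1) = π * (a - 2 * s) + π := by ring
    rw [this, Real.sin_add_pi] at hS2'
    intro h; rw [h] at hS2'; simp at hS2'
  -- Gamma nonvanishing
  have hD : Real.Gamma (-a) ≠ 0 := by
    apply Real.Gamma_ne_zero
    intro m
    rcases m with _ | m
    · simpa using ha0
    · push_cast; intro h; nlinarith [(Nat.cast_nonneg m : (0:ℝ) ≤ (m:ℝ))]
  have hB : Real.Gamma (a - 2 * s + 1) ≠ 0 := by
    apply Real.Gamma_ne_zero
    intro m
    rcases m with _ | m
    · simpa using hb0
    · push_cast; intro h; nlinarith [(Nat.cast_nonneg m : (0:ℝ) ≤ (m:ℝ))]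
  -- reflection formulas
  have h1 : Real.Gamma (a + 1) * Real.Gamma (-a) * Real.sin (π * a) = -π := by
    have := Real.Gamma_mul_Gamma_one_sub (a + 1)
    have e1 : (1 : ℝ) - (a + 1) = -a := by ring
    have e2 : π * (a + 1) = π * a + π := by ring
    rw [e1, e2, Real.sin_add_pi] at this
    rw [eq_div_iff (neg_ne_zero.mpr hS3)] at this
    linear_combination -this
  have h2 : Real.Gamma (a - 2 * s + 1) * Real.Gamma (2 * s - a) *
      Real.sin (π * (a - 2 * s)) = -π := by
    have := Real.Gamma_mul_Gamma_one_sub (a - 2 * s + 1)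
    have e1 : (1 : ℝ) - (a - 2 * s + 1) = 2 * s - a := by ring
    have e2 : π * (a - 2 * s + 1) = π * (a - 2 * s) + π := by ring
    rw [e1, e2, Real.sin_add_pi] at this
    rw [eq_div_iff (neg_ne_zero.mpr hS2)] at this
    linear_combination -this
  -- rewrite RHS arguments
  have eA : (2 * s - 1 - a) + 1 = 2 * s - a := by ring
  have eB : (2 * s - 1 - a) - 2 * s + 1 = -a := by ring
  have eS1 : Real.sin (π * ((2 * s - 1 - a) - s)) = Real.sin (π * (a - s)) := by
    rw [show π * ((2 * s - 1 - a) - s) = -(π * (a - s) + π) by ring, Real.sin_neg,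
      Real.sin_add_pi, neg_neg]
  have eS2 : Real.sin (π * ((2 * s - 1 - a) - 2 * s)) = Real.sin (π * a) := by
    rw [show π * ((2 * s - 1 - a) - 2 * s) = -(π * a + π) by ring, Real.sin_neg,
      Real.sin_add_pi, neg_neg]
  rw [eA, eB, eS1, eS2]
  rw [div_mul_div_comm, div_mul_div_comm, div_eq_div_iff (mul_ne_zero hB hS2) (mul_ne_zero hD hS3)]
  linear_combination Real.sin (π * (a - s)) * h1 - Real.sin (π * (a - s)) * h2
end

section
/- Let n ≥ 2, s ∈ (0,1), and let K : ℝⁿ \ {0} → [0,∞) be measurable, symmetric and homogeneous of degree −n−2s with K bounded on the unit sphere. Let U : ℝ → ℝ and a ∈ ℝ be such that t ↦ |2U(a) − U(a+t) − U(a−t)| · |t|^{−1−2s} is Lebesgue integrable on ℝ. Then h ↦ (2U(a) − U(a + h_n) − U(a − h_n)) K(h) is integrable on ℝⁿ and ∫_{ℝⁿ} (2U(a) − U(a + h_n) − U(a − h_n)) K(h) dh = C_K ∫_ℝ (2U(a) − U(a+t) − U(a−t)) |t|^{−1−2s} dt, where C_K = ∫_{ℝ^{n−1}} K((w',1)) dw'.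 -/
open MeasureTheory

/-- The vector `(h', t) ∈ ℝⁿ` obtained by appending a last coordinate `t` to `h' ∈ ℝ^{n-1}`. -/
noncomputable def snocE (m : ℕ) (h' : EuclideanSpace ℝ (Fin m)) (t : ℝ) :
    EuclideanSpace ℝ (Fin (m + 1)) :=
  (WithLp.equiv 2 (Fin (m + 1) → ℝ)).symm (Fin.snoc ((WithLp.equiv 2 (Fin m → ℝ)) h') t)

lemma snocE_last (m : ℕ) (w' : EuclideanSpace ℝ (Fin m)) (t : ℝ) :
    snocE m w' t (Fin.last m) = t := by simp [snocE]

lemma snocE_castSucc (m : ℕ) (w' : EuclideanSpace ℝ (Fin m)) (t : ℝ) (j : Fin m) :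
    snocE m w' t (Fin.castSucc j) = w' j := by simp [snocE]

lemma snocE_smul (m : ℕ) (w' : EuclideanSpace ℝ (Fin m)) (t c : ℝ) :
    c • snocE m w' t = snocE m (c • w') (c * t) := by
  ext i
  induction i using Fin.lastCases with
  | last => simp [snocE_last]
  | cast j => simp [snocE_castSucc]

lemma snocE_ne_zero (m : ℕ) (w' : EuclideanSpace ℝ (Fin m)) {t : ℝ} (ht : t ≠ 0) :
    snocE m w' t ≠ 0 := by
  intro h
  apply ht
  have := congrFun (congrArg (WithLp.equiv 2 (Fin (m+1) → ℝ)) h) (Fin.last m)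
  simpa [snocE] using this

lemma norm_snocE (m : ℕ) (w' : EuclideanSpace ℝ (Fin m)) (t : ℝ) :
    ‖snocE m w' t‖ = Real.sqrt (‖w'‖ ^ 2 + t ^ 2) := by
  rw [EuclideanSpace.norm_eq]
  congr 1
  have : ‖w'‖ ^ 2 = ∑ j : Fin m, ‖w' j‖ ^ 2 := by
    rw [EuclideanSpace.norm_eq, Real.sq_sqrt]; positivity
  rw [this, Fin.sum_univ_castSucc]
  simp [snocE_last, snocE_castSucc, Real.norm_eq_abs, sq_abs]

noncomputable def snocEquiv (m : ℕ) :
    (ℝ × EuclideanSpace ℝ (Fin m)) ≃ᵐ EuclideanSpace ℝ (Fin (m + 1)) :=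
  ((MeasurableEquiv.refl ℝ).prodCongr ((MeasurableEquiv.toLp 2 (Fin m → ℝ)).symm)).trans
    ((MeasurableEquiv.piFinSuccAbove (fun _ => ℝ) (Fin.last m)).symm.trans
      ((MeasurableEquiv.toLp 2 (Fin (m + 1) → ℝ)).symm).symm)

lemma snocEquiv_apply (m : ℕ) (t : ℝ) (w' : EuclideanSpace ℝ (Fin m)) :
    snocEquiv m (t, w') = snocE m w' t := by
  show ((MeasurableEquiv.toLp 2 (Fin (m + 1) → ℝ)).symm).symm
      ((MeasurableEquiv.piFinSuccAbove (fun _ => ℝ) (Fin.last m)).symm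
        (t, ((MeasurableEquiv.toLp 2 (Fin m → ℝ)).symm) w')) = _
  have : (MeasurableEquiv.piFinSuccAbove (fun _ => ℝ) (Fin.last m)).symm
        (t, ((MeasurableEquiv.toLp 2 (Fin m → ℝ)).symm) w')
      = Fin.insertNth (Fin.last m) t (((MeasurableEquiv.toLp 2 (Fin m → ℝ)).symm) w') := rfl
  rw [this, Fin.insertNth_last']
  rfl

lemma snocEquiv_mp (m : ℕ) :
    MeasurePreserving (snocEquiv m) ((volume : Measure ℝ).prod volume) volume := by
  have h1 : MeasurePreserving
      (Prod.map (id : ℝ → ℝ) ((MeasurableEquiv.toLp 2 (Fin m → ℝ)).symm))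
      (volume.prod volume) (volume.prod volume) :=
    (MeasurePreserving.id volume).prod (EuclideanSpace.volume_preserving_symm_measurableEquiv_toLp (Fin m))
  have h2 := (volume_preserving_piFinSuccAbove (fun _ : Fin (m+1) => ℝ) (Fin.last m)).symm
  have h3 := (EuclideanSpace.volume_preserving_symm_measurableEquiv_toLp (Fin (m + 1))).symm
  exact (h3.comp h2).comp h1

theorem stmt_16 (m : ℕ) (hm : 1 ≤ m) (s Λ : ℝ) (hs : s ∈ Set.Ioo (0 : ℝ) 1)
    (K : EuclideanSpace ℝ (Fin (m + 1)) → ℝ)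
    (hKmeas : Measurable K) (hKnn : ∀ h, 0 ≤ K h)
    (hKsymm : ∀ h, K (-h) = K h)
    (hKhom : ∀ h : EuclideanSpace ℝ (Fin (m + 1)), h ≠ 0 →
      K h = ‖h‖ ^ (-((m : ℝ) + 1) - 2 * s) * K (‖h‖⁻¹ • h))
    (hKbd : ∀ h : EuclideanSpace ℝ (Fin (m + 1)), ‖h‖ = 1 → K h ≤ Λ)
    (U : ℝ → ℝ) (a : ℝ)
    (hint : Integrable
      (fun t : ℝ => (2 * U a - U (a + t) - U (a - t)) * |t| ^ (-1 - 2 * s))) :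
    Integrable (fun h : EuclideanSpace ℝ (Fin (m + 1)) =>
        (2 * U a - U (a + h (Fin.last m)) - U (a - h (Fin.last m))) * K h) ∧
    (∫ h : EuclideanSpace ℝ (Fin (m + 1)),
        (2 * U a - U (a + h (Fin.last m)) - U (a - h (Fin.last m))) * K h) =
      (∫ w' : EuclideanSpace ℝ (Fin m), K (snocE m w' 1)) *
        ∫ t : ℝ, (2 * U a - U (a + t) - U (a - t)) * |t| ^ (-1 - 2 * s) := by
  obtain ⟨hs0, hs1⟩ := hs
  set α : ℝ := -((m : ℝ) + 1) - 2 * s with hα_def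
  have hα_neg : α < 0 := by
    have : (0:ℝ) ≤ (m:ℝ) := Nat.cast_nonneg m
    simp only [hα_def]; nlinarith
  set f : ℝ → ℝ := fun t => 2 * U a - U (a + t) - U (a - t) with hf_def
  -- Λ is nonnegative
  have hΛ : 0 ≤ Λ := by
    have h1 : ‖(EuclideanSpace.single (Fin.last m) (1:ℝ) :
        EuclideanSpace ℝ (Fin (m+1)))‖ = 1 := by
      rw [EuclideanSpace.norm_single]; norm_num
    exact le_trans (hKnn _) (hKbd _ h1)
  -- scaling property of K
  have hscale : ∀ (c : ℝ), c ≠ 0 → ∀ h : EuclideanSpace ℝ (Fin (m + 1)), h ≠ 0 →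
      K (c • h) = |c| ^ α * K h := by
    have hpos : ∀ (c : ℝ), 0 < c → ∀ h : EuclideanSpace ℝ (Fin (m + 1)), h ≠ 0 →
        K (c • h) = c ^ α * K h := by
      intro c hc h hh
      have hch : c • h ≠ 0 := smul_ne_zero hc.ne' hh
      have hn : ‖c • h‖ = c * ‖h‖ := by
        rw [norm_smul, Real.norm_eq_abs, abs_of_pos hc]
      have hh' : (0:ℝ) < ‖h‖ := norm_pos_iff.2 hh
      have hu : ‖c • h‖⁻¹ • (c • h) = ‖h‖⁻¹ • h := by
        rw [hn, smul_smul]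
        congr 1
        field_simp
      rw [hKhom _ hch, hu, hn, Real.mul_rpow hc.le (norm_nonneg h), mul_assoc,
        ← hKhom _ hh]
    intro c hc h hh
    rcases lt_or_gt_of_ne hc with hneg | hposc
    · have : c • h = -((-c) • h) := by rw [neg_smul, neg_neg]
      rw [this, hKsymm, hpos (-c) (by linarith) h hh, abs_of_neg hneg]
    · rw [hpos c hposc h hh, abs_of_pos hposc]
  -- integrability of the hyperplane kernel
  have hmeas_snoc : ∀ t : ℝ, Measurable fun w' : EuclideanSpace ℝ (Fin m) =>
      K (snocE m w' t) := by
    intro t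
    have h1 : Measurable fun w' : EuclideanSpace ℝ (Fin m) => snocEquiv m (t, w') :=
      (snocEquiv m).measurable.comp measurable_prodMk_left
    have : (fun w' : EuclideanSpace ℝ (Fin m) => K (snocE m w' t))
        = fun w' => K (snocEquiv m (t, w')) := by
      funext w'; rw [snocEquiv_apply]
    rw [this]
    exact hKmeas.comp h1
  have hKbd' : ∀ h : EuclideanSpace ℝ (Fin (m + 1)), h ≠ 0 → K h ≤ Λ * ‖h‖ ^ α := by
    intro h hh
    have h1 : ‖‖h‖⁻¹ • h‖ = 1 := norm_smul_inv_norm hh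
    rw [hKhom _ hh]
    calc ‖h‖ ^ α * K (‖h‖⁻¹ • h) ≤ ‖h‖ ^ α * Λ :=
          mul_le_mul_of_nonneg_left (hKbd _ h1) (Real.rpow_nonneg (norm_nonneg h) α)
      _ = Λ * ‖h‖ ^ α := mul_comm _ _
  have hsnoc1_norm : ∀ w' : EuclideanSpace ℝ (Fin m),
      (1 + ‖w'‖) / 2 ≤ ‖snocE m w' 1‖ ∧ (0:ℝ) < ‖snocE m w' 1‖ := by
    intro w'
    have h1 : (1:ℝ) ≤ ‖snocE m w' 1‖ := by
      rw [norm_snocE]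
      have := Real.sqrt_le_sqrt (show (1:ℝ) ≤ ‖w'‖ ^ 2 + 1 ^ 2 by nlinarith [sq_nonneg ‖w'‖])
      rwa [Real.sqrt_one] at this
    have h2 : ‖w'‖ ≤ ‖snocE m w' 1‖ := by
      rw [norm_snocE]
      have := Real.sqrt_le_sqrt (show ‖w'‖ ^ 2 ≤ ‖w'‖ ^ 2 + 1 ^ 2 by nlinarith)
      rwa [Real.sqrt_sq (norm_nonneg w')] at this
    exact ⟨by linarith, by linarith⟩
  have hCKbd : ∀ w' : EuclideanSpace ℝ (Fin m),
      K (snocE m w' 1) ≤ (Λ * 2 ^ (-α)) * (1 + ‖w'‖) ^ α := by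
    intro w'
    obtain ⟨hle, hpos⟩ := hsnoc1_norm w'
    have hw0 : (0:ℝ) < (1 + ‖w'‖) / 2 := by positivity
    have h2 : ‖snocE m w' 1‖ ^ α ≤ ((1 + ‖w'‖) / 2) ^ α :=
      Real.rpow_le_rpow_of_nonpos hw0 hle hα_neg.le
    have h3 : ((1 + ‖w'‖) / 2) ^ α = (1 + ‖w'‖) ^ α * 2 ^ (-α) := by
      rw [Real.div_rpow (by positivity) (by norm_num), Real.rpow_neg (by norm_num)]
      ring
    calc K (snocE m w' 1) ≤ Λ * ‖snocE m w' 1‖ ^ α :=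
          hKbd' _ (snocE_ne_zero m w' one_ne_zero)
      _ ≤ Λ * ((1 + ‖w'‖) / 2) ^ α := mul_le_mul_of_nonneg_left h2 hΛ
      _ = (Λ * 2 ^ (-α)) * (1 + ‖w'‖) ^ α := by rw [h3]; ring
  have hCKint : Integrable fun w' : EuclideanSpace ℝ (Fin m) => K (snocE m w' 1) := by
    have hr : (Module.finrank ℝ (EuclideanSpace ℝ (Fin m)) : ℝ) < ((m:ℝ) + 1) + 2 * s := by
      rw [finrank_euclideanSpace_fin]; linarith
    have hIb : Integrable fun w' : EuclideanSpace ℝ (Fin m) =>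
        (Λ * 2 ^ (-α)) * (1 + ‖w'‖) ^ (-(((m:ℝ) + 1) + 2 * s)) :=
      (integrable_one_add_norm hr).const_mul _
    have hαeq : α = -(((m:ℝ) + 1) + 2 * s) := by rw [hα_def]; ring
    refine hIb.mono' (hmeas_snoc 1).aestronglyMeasurable ?_
    filter_upwards with w'
    rw [Real.norm_eq_abs, abs_of_nonneg (hKnn _), ← hαeq]
    exact hCKbd w'
  set C : ℝ := ∫ w' : EuclideanSpace ℝ (Fin m), K (snocE m w' 1) with hC_def
  -- slice identities
  have hslice_eq : ∀ t : ℝ, t ≠ 0 →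
      (fun w' : EuclideanSpace ℝ (Fin m) => K (snocE m w' t))
        = fun w' => |t| ^ α * K (snocE m (t⁻¹ • w') 1) := by
    intro t ht
    funext w'
    have h1 : snocE m w' t = t • snocE m (t⁻¹ • w') 1 := by
      rw [snocE_smul, smul_smul, mul_inv_cancel₀ ht, one_smul, mul_one]
    rw [h1, hscale t ht _ (snocE_ne_zero m _ one_ne_zero)]
  have hslice_int : ∀ t : ℝ, t ≠ 0 →
      Integrable fun w' : EuclideanSpace ℝ (Fin m) => K (snocE m w' t) := by
    intro t ht
    rw [hslice_eq t ht]
    exact ((hCKint.comp_smul (inv_ne_zero ht)).const_mul _)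
  have hslice_integral : ∀ t : ℝ, t ≠ 0 →
      (∫ w' : EuclideanSpace ℝ (Fin m), K (snocE m w' t))
        = |t| ^ (-1 - 2 * s) * C := by
    intro t ht
    have habs : (0:ℝ) < |t| := abs_pos.2 ht
    rw [hslice_eq t ht, integral_const_mul,
      Measure.integral_comp_smul volume (fun v' => K (snocE m v' 1)) t⁻¹]
    rw [finrank_euclideanSpace_fin]
    have h2 : |((t⁻¹) ^ m)⁻¹| = |t| ^ (m:ℝ) := by
      rw [← inv_pow, inv_inv, abs_pow, Real.rpow_natCast]
    rw [smul_eq_mul, h2, ← mul_assoc, ← Real.rpow_add habs]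
    congr 2
    push_cast [hα_def]; ring
  -- almost every t is nonzero
  have h0ae : ∀ᵐ t : ℝ, t ≠ 0 := by
    rw [ae_iff]
    simpa using measure_singleton (0:ℝ)
  -- measurable representative g of f
  obtain ⟨g', hg'sm, hg'eq⟩ := hint.1
  set g : ℝ → ℝ := fun t => g' t * |t| ^ (1 + 2 * s) with hg_def
  have hgmeas : Measurable g := by
    apply hg'sm.measurable.mul
    fun_prop
  have hfg : (fun t : ℝ => f t) =ᵐ[volume] g := by
    filter_upwards [hg'eq, h0ae] with t ht1 ht2
    have hexp : (-1 - 2 * s) + (1 + 2 * s) = 0 := by ring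
    show f t = g' t * |t| ^ (1 + 2 * s)
    rw [← ht1, mul_assoc, ← Real.rpow_add (abs_pos.2 ht2), hexp, Real.rpow_zero, mul_one]
  have hgint : Integrable (fun t : ℝ => g t * |t| ^ (-1 - 2 * s)) :=
    hint.congr (hfg.mul (Filter.EventuallyEq.refl _ _))
  -- the function on the product space
  set P : ℝ × EuclideanSpace ℝ (Fin m) → ℝ :=
    fun p => g p.1 * K (snocE m p.2 p.1) with hP_def
  have hPmeas : AEStronglyMeasurable P ((volume : Measure ℝ).prod volume) := by
    apply Measurable.aestronglyMeasurable
    apply (hgmeas.comp measurable_fst).mul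
    have hKP : (fun p : ℝ × EuclideanSpace ℝ (Fin m) => K (snocE m p.2 p.1))
        = K ∘ (snocEquiv m) := by
      funext p
      rw [Function.comp_apply, ← snocEquiv_apply m p.1 p.2]
    rw [hKP]
    exact hKmeas.comp (snocEquiv m).measurable
  have hPint : Integrable P ((volume : Measure ℝ).prod volume) := by
    refine (integrable_prod_iff hPmeas).2 ⟨?_, ?_⟩
    · filter_upwards [h0ae] with t ht
      simp only [hP_def]
      exact (hslice_int t ht).const_mul _
    · have heq : (fun t : ℝ => ∫ w' : EuclideanSpace ℝ (Fin m), ‖g t * K (snocE m w' t)‖)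
          =ᵐ[volume] fun t => C * |g t * |t| ^ (-1 - 2 * s)| := by
        filter_upwards [h0ae] with t ht
        have h1 : ∀ w' : EuclideanSpace ℝ (Fin m),
            ‖g t * K (snocE m w' t)‖ = |g t| * K (snocE m w' t) := by
          intro w'
          rw [Real.norm_eq_abs, abs_mul, abs_of_nonneg (hKnn _)]
        simp only [hP_def, h1]
        rw [integral_const_mul, hslice_integral t ht,
          abs_mul (g t) (|t| ^ (-1 - 2 * s)),
          abs_of_nonneg (Real.rpow_nonneg (abs_nonneg t) (-1 - 2 * s))]
        ring
      exact Integrable.congr ((hgint.abs).const_mul C) heq.symm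
  -- relate the function on Euclidean space to P
  have hcomp : (fun p : ℝ × EuclideanSpace ℝ (Fin m) =>
        f ((snocEquiv m p) (Fin.last m)) * K (snocEquiv m p))
      =ᵐ[(volume : Measure ℝ).prod volume] P := by
    have hqmp : Measure.QuasiMeasurePreserving
        (Prod.fst : ℝ × EuclideanSpace ℝ (Fin m) → ℝ)
        ((volume : Measure ℝ).prod volume) volume :=
      Measure.quasiMeasurePreserving_fst
    have hlift := hqmp.ae_eq hfg
    filter_upwards [hlift] with p hp
    have h1 : snocEquiv m p = snocE m p.2 p.1 := by
      rw [← snocEquiv_apply m p.1 p.2]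
    rw [h1, snocE_last]
    have hp' : f p.1 = g p.1 := hp
    rw [hp']
  have hemb := (snocEquiv m).measurableEmbedding
  have hFint : Integrable
      (fun h : EuclideanSpace ℝ (Fin (m + 1)) => f (h (Fin.last m)) * K h) := by
    rw [← (snocEquiv_mp m).integrable_comp_emb hemb]
    exact hPint.congr hcomp.symm
  have hIeq1 : (∫ h : EuclideanSpace ℝ (Fin (m + 1)), f (h (Fin.last m)) * K h)
      = ∫ p, P p ∂((volume : Measure ℝ).prod volume) := by
    rw [← (snocEquiv_mp m).integral_comp hemb
      (fun h : EuclideanSpace ℝ (Fin (m + 1)) => f (h (Fin.last m)) * K h)]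
    exact integral_congr_ae hcomp
  have hIeq2 : (∫ p, P p ∂((volume : Measure ℝ).prod volume))
      = ∫ t : ℝ, ∫ w' : EuclideanSpace ℝ (Fin m), g t * K (snocE m w' t) :=
    integral_prod P hPint
  have hIeq3 : (∫ t : ℝ, ∫ w' : EuclideanSpace ℝ (Fin m), g t * K (snocE m w' t))
      = ∫ t : ℝ, C * (g t * |t| ^ (-1 - 2 * s)) := by
    apply integral_congr_ae
    filter_upwards [h0ae] with t ht
    rw [integral_const_mul, hslice_integral t ht]
    ring
  have hIeq5 : (∫ t : ℝ, g t * |t| ^ (-1 - 2 * s))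
      = ∫ t : ℝ, f t * |t| ^ (-1 - 2 * s) :=
    (integral_congr_ae (hfg.mul (Filter.EventuallyEq.refl _ _))).symm
  constructor
  · exact hFint
  · show (∫ h : EuclideanSpace ℝ (Fin (m + 1)), f (h (Fin.last m)) * K h)
      = C * ∫ t : ℝ, f t * |t| ^ (-1 - 2 * s)
    rw [hIeq1, hIeq2, hIeq3, integral_const_mul, hIeq5]
end
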